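/- arXiv:1205.5352 — 7 statements merged into one kernel-verified Lean document; each statement's English description precedes it below -/
import Mathlib

section
/- The element β = Σ_{j=1}^n f_j† f_j of 𝒞 satisfies the characteristic equation β(β − 1)(β − 2)⋯(β − n) = 0, i.e. the product ∏_{ℓ=0}^{n} (β − ℓ·1) equals 0 in 𝒞. -/
noncomputable section

/-- The quadratic form `Q(x) = -(x_1^2 + ⋯ + x_m^2)` on `ℂ^m`. -/
def Qform (m : ℕ) : QuadraticForm ℂ (Fin m → ℂ) :=
  QuadraticMap.weightedSumSquares ℂ (fun _ : Fin m => (-1 : ℂ))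

/-- The complex Clifford algebra of `ℂ^m` with `Q(x) = -∑ x_j^2`. -/
abbrev Cl (m : ℕ) : Type := CliffordAlgebra (Qform m)

/-- The generators `e_j`, images of the standard basis vectors. -/
def gen (m : ℕ) (j : Fin m) : Cl m := CliffordAlgebra.ι (Qform m) (Pi.single j 1)

/-- The Witt basis element `f_j = (1/2)(e_j - i e_{n+j})`. -/
def fw (n : ℕ) (j : Fin n) : Cl (2 * n) :=
  (2⁻¹ : ℂ) • (gen (2 * n) ⟨j.val, by have := j.isLt; omega⟩
    - Complex.I • gen (2 * n) ⟨n + j.val, by have := j.isLt; omega⟩)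

/-- The Witt basis element `f_j† = -(1/2)(e_j + i e_{n+j})`. -/
def fwd (n : ℕ) (j : Fin n) : Cl (2 * n) :=
  -((2⁻¹ : ℂ) • (gen (2 * n) ⟨j.val, by have := j.isLt; omega⟩
    + Complex.I • gen (2 * n) ⟨n + j.val, by have := j.isLt; omega⟩))

/-- The Hermitian vector variable `𝐳 = ∑ z_j f_j`. -/
def zvec (n : ℕ) (z : Fin n → ℂ) : Cl (2 * n) := ∑ j, z j • fw n j

/-- The Hermitian conjugate vector variable `𝐳† = ∑ conj(z_j) f_j†`. -/
def zvecd (n : ℕ) (z : Fin n → ℂ) : Cl (2 * n) :=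
  ∑ j, (starRingEnd ℂ) (z j) • fwd n j

/-- The fermionic Euler operator `β = ∑ f_j† f_j`. -/
def beta (n : ℕ) : Cl (2 * n) := ∑ j, fwd n j * fw n j

/-!
The number operators `p_j = f_j† f_j` are pairwise commuting idempotents. This follows from the
anticommutation relations `f_j f_j† + f_j† f_j = 1`, `f_j² = 0`, and `f_j, f_j†` anticommuting
with `f_k, f_k†` for `j ≠ k`; all of them come from `ι u ι v + ι v ι u = -2 (u ⬝ v)` in the
Clifford algebra, evaluated on the vectors `e_j ∓ i e_{n+j}`.

A sum `e + a` with `e` idempotent commuting with `a` acts as `a + 1` on `e` and as `a` on `1 - e`.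
Hence, by induction, a sum of `k` commuting idempotents is a root of
`descPochhammer ℤ (k + 1) = X (X - 1) ⋯ (X - k)`.
-/

open Polynomial CliffordAlgebra

section DescPochhammer

variable {A : Type*} [Ring A]

theorem aeval_descPochhammer_eq_prod_range (x : A) (k : ℕ) :
    aeval x (descPochhammer ℤ k) = ((List.range k).map fun l : ℕ => x - l).prod := by
  induction k with
  | zero => simp
  | succ k ih => simp [descPochhammer_succ_right, List.range_succ, ih]

theorem pow_mul_eq_pow_mul_of_mul_eq {e y z : A} (hz : Commute z e) (h : y * e = z * e)
    (m : ℕ) : y ^ m * e = z ^ m * e := by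
  induction m with
  | zero => simp
  | succ m ih =>
    rw [pow_succ, mul_assoc, h, hz.eq, ← mul_assoc, ih, mul_assoc, ← hz.eq, ← mul_assoc,
      ← pow_succ]

theorem aeval_mul_eq_aeval_mul_of_mul_eq {e y z : A} (hz : Commute z e) (h : y * e = z * e)
    (p : ℤ[X]) : aeval y p * e = aeval z p * e := by
  induction p using Polynomial.induction_on' with
  | add p q hp hq => rw [map_add, map_add, add_mul, add_mul, hp, hq]
  | monomial m c =>
    rw [aeval_monomial, aeval_monomial, mul_assoc, mul_assoc, pow_mul_eq_pow_mul_of_mul_eq hz h]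

theorem aeval_add_descPochhammer_eq_zero {e a : A} (he : IsIdempotentElem e) (hea : Commute e a)
    {k : ℕ} (ha : aeval a (descPochhammer ℤ (k + 1)) = 0) :
    aeval (e + a) (descPochhammer ℤ (k + 2)) = 0 := by
  set P := aeval (e + a) (descPochhammer ℤ (k + 2))
  have hP_e : P * e = 0 := by
    have h : (e + a) * e = (a + 1) * e := by rw [add_mul, he.eq, add_mul, one_mul, add_comm]
    rw [aeval_mul_eq_aeval_mul_of_mul_eq (hea.symm.add_left (Commute.one_left e)) h,
      descPochhammer_succ_left, map_mul, aeval_comp]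
    simp [ha]
  have hP_one_sub_e : P * (1 - e) = 0 := by
    have h : (e + a) * (1 - e) = a * (1 - e) := by
      rw [add_mul, mul_sub, mul_one, he.eq, sub_self, zero_add]
    rw [aeval_mul_eq_aeval_mul_of_mul_eq ((Commute.one_right a).sub_right hea.symm) h,
      descPochhammer_succ_right, map_mul, ha, zero_mul, zero_mul]
  calc P = P * e + P * (1 - e) := by rw [mul_sub, mul_one, add_sub_cancel]
    _ = 0 := by rw [hP_e, hP_one_sub_e, add_zero]

theorem aeval_sum_descPochhammer_eq_zero {ι : Type*} (e : ι → A)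
    (he : ∀ j, IsIdempotentElem (e j)) (hc : ∀ j k, Commute (e j) (e k)) (s : Finset ι) :
    aeval (∑ j ∈ s, e j) (descPochhammer ℤ (s.card + 1)) = 0 := by
  classical
  induction s using Finset.induction_on with
  | empty => simp [descPochhammer_one]
  | insert j s hj ih =>
    rw [Finset.sum_insert hj, Finset.card_insert_of_notMem hj]
    exact aeval_add_descPochhammer_eq_zero (he j) (Commute.sum_right _ _ _ fun k _ => hc j k) ih

end DescPochhammer

section Anticommute

variable {A : Type*} [Ring A]

theorem commute_mul_of_anticomm {a b c : A} (hb : a * b = -(b * a)) (hc : a * c = -(c * a)) :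
    Commute a (b * c) := by
  rw [Commute, SemiconjBy, ← mul_assoc, hb, neg_mul, mul_assoc, hc, mul_neg, neg_neg, mul_assoc]

theorem commute_mul_mul_of_anticomm {a b c d : A} (hac : a * c = -(c * a))
    (had : a * d = -(d * a)) (hbc : b * c = -(c * b)) (hbd : b * d = -(d * b)) :
    Commute (a * b) (c * d) :=
  (commute_mul_of_anticomm hac had).mul_left (commute_mul_of_anticomm hbc hbd)

theorem isIdempotentElem_mul_of_add_eq_one {a b : A} (h : b * a + a * b = 1) (hb : b * b = 0) :
    IsIdempotentElem (a * b) := by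
  rw [IsIdempotentElem, mul_assoc, ← mul_assoc b, eq_sub_of_add_eq h, sub_mul, one_mul, mul_sub,
    mul_assoc, hb, mul_zero, mul_zero, sub_zero]

end Anticommute

section Clifford

variable {m : ℕ}

theorem Qform_apply (u : Fin m → ℂ) : Qform m u = -(u ⬝ᵥ u) := by
  simp [Qform, QuadraticMap.weightedSumSquares_apply, dotProduct]

theorem polar_Qform (u v : Fin m → ℂ) : QuadraticMap.polar (Qform m) u v = -2 * (u ⬝ᵥ v) := by
  simp only [QuadraticMap.polar, Qform_apply, add_dotProduct, dotProduct_add,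
    dotProduct_comm v u]
  ring

theorem ι_Qform_mul_self (u : Fin m → ℂ) :
    ι (Qform m) u * ι (Qform m) u = algebraMap ℂ (Cl m) (-(u ⬝ᵥ u)) := by
  rw [ι_sq_scalar, Qform_apply]

theorem ι_Qform_mul_add_swap (u v : Fin m → ℂ) :
    ι (Qform m) u * ι (Qform m) v + ι (Qform m) v * ι (Qform m) u =
      algebraMap ℂ (Cl m) (-2 * (u ⬝ᵥ v)) := by
  rw [ι_mul_ι_add_swap, polar_Qform]

theorem ι_Qform_anticomm_of_dotProduct_eq_zero {u v : Fin m → ℂ} (h : u ⬝ᵥ v = 0) :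
    ι (Qform m) u * ι (Qform m) v = -(ι (Qform m) v * ι (Qform m) u) :=
  eq_neg_of_add_eq_zero_left (by rw [ι_Qform_mul_add_swap, h, mul_zero, map_zero])

end Clifford

section Witt

variable (n : ℕ)

def fstIdx (j : Fin n) : Fin (2 * n) := ⟨j.val, by omega⟩

def sndIdx (j : Fin n) : Fin (2 * n) := ⟨n + j.val, by omega⟩

def wittVec (j : Fin n) (c : ℂ) : Fin (2 * n) → ℂ :=
  Pi.single (fstIdx n j) 1 + c • Pi.single (sndIdx n j) 1

variable {n}

theorem fw_eq_ι (j : Fin n) :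
    fw n j = ι (Qform (2 * n)) ((2⁻¹ : ℂ) • wittVec n j (-Complex.I)) := by
  simp [fw, gen, wittVec, fstIdx, sndIdx, sub_eq_add_neg]

theorem fwd_eq_ι (j : Fin n) :
    fwd n j = ι (Qform (2 * n)) (-(2⁻¹ : ℂ) • wittVec n j Complex.I) := by
  simp [fwd, gen, wittVec, fstIdx, sndIdx, add_comm]

theorem wittVec_dotProduct_wittVec (j k : Fin n) (c d : ℂ) :
    wittVec n j c ⬝ᵥ wittVec n k d = if j = k then 1 + c * d else 0 := by
  simp only [wittVec, dotProduct_add, dotProduct_smul, dotProduct_single]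
  split_ifs with h
  · subst h
    simp [fstIdx, sndIdx, Fin.ext_iff, j.pos.ne', add_comm, mul_comm]
  · have hkj : (k : ℕ) ≠ n + j := by omega
    have hjk : n + (k : ℕ) ≠ j := by omega
    simp [fstIdx, sndIdx, Fin.ext_iff, Fin.val_ne_of_ne h, hkj, hjk]

theorem fw_mul_self (j : Fin n) : fw n j * fw n j = 0 := by
  rw [fw_eq_ι, ι_Qform_mul_self, smul_dotProduct, dotProduct_smul, wittVec_dotProduct_wittVec]
  simp

theorem fw_mul_fwd_add_fwd_mul_fw (j : Fin n) : fw n j * fwd n j + fwd n j * fw n j = 1 := by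
  rw [fw_eq_ι, fwd_eq_ι, ι_Qform_mul_add_swap, smul_dotProduct, dotProduct_smul,
    wittVec_dotProduct_wittVec, if_pos rfl, ← map_one (algebraMap ℂ (Cl (2 * n)))]
  congr 1
  linear_combination (-1 / 2 : ℂ) * Complex.I_mul_I

theorem ι_wittVec_anticomm {j k : Fin n} (h : j ≠ k) (s t c d : ℂ) :
    ι (Qform (2 * n)) (s • wittVec n j c) * ι (Qform (2 * n)) (t • wittVec n k d) =
      -(ι (Qform (2 * n)) (t • wittVec n k d) * ι (Qform (2 * n)) (s • wittVec n j c)) :=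
  ι_Qform_anticomm_of_dotProduct_eq_zero (by simp [wittVec_dotProduct_wittVec, h])

theorem isIdempotentElem_fwd_mul_fw (j : Fin n) : IsIdempotentElem (fwd n j * fw n j) :=
  isIdempotentElem_mul_of_add_eq_one (fw_mul_fwd_add_fwd_mul_fw j) (fw_mul_self j)

theorem commute_fwd_mul_fw (j k : Fin n) : Commute (fwd n j * fw n j) (fwd n k * fw n k) := by
  obtain rfl | h := eq_or_ne j k
  · exact Commute.refl _
  · simp only [fw_eq_ι, fwd_eq_ι]
    exact commute_mul_mul_of_anticomm (ι_wittVec_anticomm h ..) (ι_wittVec_anticomm h ..)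
      (ι_wittVec_anticomm h ..) (ι_wittVec_anticomm h ..)

end Witt

theorem beta_characteristic_equation_general (n : ℕ) :
    (((List.range (n + 1)).map
      (fun l => beta n - (l : ℂ) • (1 : Cl (2 * n)))).prod) = 0 := by
  have h := aeval_sum_descPochhammer_eq_zero _ isIdempotentElem_fwd_mul_fw commute_fwd_mul_fw
    (Finset.univ : Finset (Fin n))
  rw [Finset.card_univ, Fintype.card_fin, aeval_descPochhammer_eq_prod_range] at h
  -- The coercion `(l : ℂ)` elaborates as a coercion of the whole list through the list monad.
  simp only [bind_pure_comp, List.map_eq_map, List.map_map]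
  simpa [Function.comp_def, Nat.cast_smul_eq_nsmul, beta] using h

/-- The fermionic Euler operator `β = ∑ f_j† f_j` satisfies the
characteristic equation `β(β-1)⋯(β-n) = 0` (ordered product over `ℓ = 0,…,n`). -/
theorem beta_characteristic_equation (n : ℕ) (hn : 1 ≤ n) :
    (((List.range (n + 1)).map
      (fun l => beta n - (l : ℂ) • (1 : Cl (2 * n)))).prod) = 0 :=
  beta_characteristic_equation_general n
end
end

section
/- Let V be a complex vector space, P, Q : V → V linear maps with P∘P = 0, let s ≥ 1 be a natural number and v, w ∈ V. Define for k ≥ 0: A_k = ((−1)^k (s−1)!/(k!(s+k)!)) P((Q∘P)^k v), C_k = ((−1)^k (s−1)!/(k!(s−1+k)!)) (Q∘P)^k v, B_k = ((−1)^{k+1} s!/(k!(s+1+k)!)) P((Q∘P)^k w), and D_0 = w, D_k = ((−1)^k (s−1)!/(k!(s+k)!)) (s·(Q∘P)^k w − P((Q∘P)^k v)) for k ≥ 1. Then C_0 = v and for all k ≥ 0 the Class II recurrence relations hold: A_k = (1/(s+k)) P C_k, C_{k+1} = −(1/(k+1)) Q A_k, B_k = −(1/(s+1+k)) P(A_k +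 D_k), and A_{k+1} + D_{k+1} = (1/(k+1)) Q B_k. -/
/-!
Since `P ∘ P = 0`, `P` kills `A_k`, and the `P ((Q ∘ P)^k v)` terms of `A_k` and `D_k` cancel,
so `P D_k` and `A_k + D_k` (`k ≥ 1`) are the multiples `s a_k P ((Q ∘ P)^k w)` and
`s a_k (Q ∘ P)^k w`, where `a_k` is the coefficient of `A_k`; for `k = 0` the first still holds
because `s a_0 = 1`. Each recurrence then reduces to an identity between the coefficients, a
consequence of `(n + 1)! = (n + 1) n!` and `s (s - 1)! = s!`.
-/

namespace ClassII

variable (s : ℕ)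

noncomputable def coeffA (k : ℕ) : ℂ :=
  ((-1 : ℂ) ^ k * ((s - 1).factorial : ℂ)) / ((k.factorial : ℂ) * ((s + k).factorial : ℂ))

noncomputable def coeffB (k : ℕ) : ℂ :=
  ((-1 : ℂ) ^ (k + 1) * (s.factorial : ℂ)) /
    ((k.factorial : ℂ) * ((s + 1 + k).factorial : ℂ))

noncomputable def coeffC (k : ℕ) : ℂ :=
  ((-1 : ℂ) ^ k * ((s - 1).factorial : ℂ)) /
    ((k.factorial : ℂ) * ((s - 1 + k).factorial : ℂ))

variable {s}

theorem coeffC_zero : coeffC s 0 = 1 := by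
  simp [coeffC, (s - 1).factorial_ne_zero]

theorem coeffA_eq (hs : 1 ≤ s) (k : ℕ) : coeffA s k = ((s : ℂ) + k)⁻¹ * coeffC s k := by
  obtain ⟨t, rfl⟩ := Nat.exists_eq_add_of_le' hs
  simp only [coeffA, coeffC, Nat.add_sub_cancel, Nat.add_right_comm t 1 k, Nat.factorial_succ]
  push_cast
  field_simp
  ring

theorem coeffC_succ (hs : 1 ≤ s) (k : ℕ) :
    coeffC s (k + 1) = -((k : ℂ) + 1)⁻¹ * coeffA s k := by
  obtain ⟨t, rfl⟩ := Nat.exists_eq_add_of_le' hs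
  simp only [coeffA, coeffC, Nat.add_sub_cancel, ← add_assoc, Nat.add_right_comm t 1 k,
    Nat.factorial_succ]
  push_cast
  field_simp
  ring

theorem coeffB_eq (hs : 1 ≤ s) (k : ℕ) :
    coeffB s k = -((s : ℂ) + 1 + k)⁻¹ * (s * coeffA s k) := by
  obtain ⟨t, rfl⟩ := Nat.exists_eq_add_of_le' hs
  rw [coeffA, coeffB, Nat.add_sub_cancel, show t + 1 + 1 + k = t + k + 1 + 1 by omega,
    show t + 1 + k = t + k + 1 by omega]
  simp only [Nat.factorial_succ]
  push_cast
  field_simp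
  ring

theorem mul_coeffA_zero (hs : 1 ≤ s) : s * coeffA s 0 = 1 := by
  have hfac : ((s * (s - 1).factorial : ℕ) : ℂ) = s.factorial :=
    congrArg _ (Nat.mul_factorial_pred (by omega))
  push_cast at hfac
  simp [coeffA, ← mul_div_assoc, hfac, Nat.factorial_ne_zero]

theorem mul_coeffA_succ (hs : 1 ≤ s) (k : ℕ) :
    s * coeffA s (k + 1) = ((k : ℂ) + 1)⁻¹ * coeffB s k := by
  obtain ⟨t, rfl⟩ := Nat.exists_eq_add_of_le' hs
  rw [coeffA, coeffB, Nat.add_sub_cancel, show t + 1 + (k + 1) = t + k + 1 + 1 by omega,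
    show t + 1 + 1 + k = t + k + 1 + 1 by omega]
  simp only [Nat.factorial_succ]
  push_cast
  field_simp

end ClassII

open ClassII in
/-- The Class II recurrence relations of the h-submonogenic
system are solved by the explicit families
`A_k = ((−1)^k (s−1)!/(k!(s+k)!)) P((Q∘P)^k v)`,
`C_k = ((−1)^k (s−1)!/(k!(s−1+k)!)) (Q∘P)^k v`,
`B_k = ((−1)^{k+1} s!/(k!(s+1+k)!)) P((Q∘P)^k w)`,
`D_0 = w`, `D_k = ((−1)^k (s−1)!/(k!(s+k)!)) (s(Q∘P)^k w − P((Q∘P)^k v))` (k ≥ 1),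
provided `P∘P = 0`. -/
theorem class_II_recurrence {V : Type*} [AddCommGroup V] [Module ℂ V]
    (P Q : V →ₗ[ℂ] V) (hP : P ∘ₗ P = 0) (s : ℕ) (hs : 1 ≤ s) (v w : V)
    (A B C D : ℕ → V)
    (hA : ∀ k, A k = (((-1 : ℂ) ^ k * ((s - 1).factorial : ℂ)) /
      ((k.factorial : ℂ) * ((s + k).factorial : ℂ))) • P (((Q ∘ₗ P) ^ k) v))
    (hC : ∀ k, C k = (((-1 : ℂ) ^ k * ((s - 1).factorial : ℂ)) /
      ((k.factorial : ℂ) * ((s - 1 + k).factorial : ℂ))) • ((Q ∘ₗ P) ^ k) v)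
    (hB : ∀ k, B k = (((-1 : ℂ) ^ (k + 1) * (s.factorial : ℂ)) /
      ((k.factorial : ℂ) * ((s + 1 + k).factorial : ℂ))) • P (((Q ∘ₗ P) ^ k) w))
    (hD0 : D 0 = w)
    (hD : ∀ k, 1 ≤ k → D k = (((-1 : ℂ) ^ k * ((s - 1).factorial : ℂ)) /
      ((k.factorial : ℂ) * ((s + k).factorial : ℂ))) •
        ((s : ℂ) • ((Q ∘ₗ P) ^ k) w - P (((Q ∘ₗ P) ^ k) v))) :
    C 0 = v ∧
    (∀ k, A k = (((s : ℂ) + k)⁻¹) • P (C k)) ∧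
    (∀ k, C (k + 1) = -(((k : ℂ) + 1)⁻¹) • Q (A k)) ∧
    (∀ k, B k = -(((s : ℂ) + 1 + k)⁻¹) • P (A k + D k)) ∧
    (∀ k, A (k + 1) + D (k + 1) = (((k : ℂ) + 1)⁻¹) • Q (B k)) := by
  replace hA : ∀ k, A k = coeffA s k • P (((Q ∘ₗ P) ^ k) v) := hA
  replace hB : ∀ k, B k = coeffB s k • P (((Q ∘ₗ P) ^ k) w) := hB
  replace hC : ∀ k, C k = coeffC s k • ((Q ∘ₗ P) ^ k) v := hC
  replace hD : ∀ k, 1 ≤ k →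
      D k = coeffA s k • ((s : ℂ) • ((Q ∘ₗ P) ^ k) w - P (((Q ∘ₗ P) ^ k) v)) := hD
  have hPP (x : V) : P (P x) = 0 := LinearMap.congr_fun hP x
  have hQP (k : ℕ) (x : V) : Q (P (((Q ∘ₗ P) ^ k) x)) = ((Q ∘ₗ P) ^ (k + 1)) x := by
    rw [pow_succ']; rfl
  have hPD (k : ℕ) : P (D k) = ((s : ℂ) * coeffA s k) • P (((Q ∘ₗ P) ^ k) w) := by
    rcases k with _ | k
    · rw [hD0, mul_coeffA_zero hs, one_smul, pow_zero, Module.End.one_apply]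
    · rw [hD _ k.succ_pos, map_smul, map_sub, map_smul, hPP, sub_zero, smul_smul, mul_comm]
  have hAD (k : ℕ) (hk : 1 ≤ k) :
      A k + D k = ((s : ℂ) * coeffA s k) • ((Q ∘ₗ P) ^ k) w := by
    rw [hA, hD k hk, smul_sub, add_sub_cancel, smul_smul, mul_comm]
  refine ⟨?_, fun k => ?_, fun k => ?_, fun k => ?_, fun k => ?_⟩
  · rw [hC, coeffC_zero, one_smul, pow_zero, Module.End.one_apply]
  · rw [hA, hC, map_smul, smul_smul, coeffA_eq hs]
  · rw [hC, hA, map_smul, hQP, smul_smul, coeffC_succ hs]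
  · rw [hB, map_add, hA, map_smul, hPP, smul_zero, zero_add, hPD, smul_smul, coeffB_eq hs]
  · rw [hAD _ k.succ_pos, hB, map_smul, hQP, smul_smul, mul_coeffA_succ hs]
end

section
/- Let V be a complex vector space, P, Q : V → V linear maps, and let (a_ℓ)_{ℓ≥0} and (c_k)_{k≥0} be families in V. Define doubly indexed families: A_{k,ℓ} = ((−1)^k (ℓ−k)!/(k! ℓ!)) (P∘Q)^k a_{ℓ−k} whenever 0 ≤ k ≤ ℓ; A_{k,ℓ} = ((−1)^ℓ (k−1−ℓ)!/(k! ℓ!)) P((Q∘P)^ℓ c_{k−1−ℓ}) whenever 0 ≤ ℓ < k; C_{k,ℓ} = ((−1)^ℓ (k−ℓ)!/(k! ℓ!)) (Q∘P)^ℓ c_{k−ℓ} whenever 0 ≤ ℓ ≤ k; and C_{k,ℓ} = ((−1)^{k+1} (ℓ−1−k)!/(k! ℓ!)) Q((P∘Q)^k a_{ℓ−1−k}) whenever 0 ≤ k < ℓ. Then A_{0,ℓ} = a_ℓ, C_{k,0} = c_k, and for all k, ℓ ≥ 0 the double power series recurrence relations hold: A_{k+1,ℓ} = (1/(k+1)) P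 C_{k,ℓ} and C_{k,ℓ+1} = −(1/(ℓ+1)) Q A_{k,ℓ}. -/
/-! In each regime the two sides of a recurrence are scalar multiples of the same vector
(after peeling one factor `P ∘ Q` or `Q ∘ P` off a power where needed), and the scalars
agree because `(n + 1)! = (n + 1) * n!`. -/

section FactorialRatio

variable {K : Type*} [Field K] [CharZero K]

theorem div_factorial_succ_mul_factorial (x : K) (k l : ℕ) :
    x / (((k + 1).factorial : K) * l.factorial) =
      ((k : K) + 1)⁻¹ * (x / ((k.factorial : K) * l.factorial)) := by
  rw [Nat.factorial_succ, Nat.cast_mul, Nat.cast_succ]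
  field_simp

theorem div_factorial_mul_factorial_succ (x : K) (k l : ℕ) :
    x / ((k.factorial : K) * (l + 1).factorial) =
      ((l : K) + 1)⁻¹ * (x / ((k.factorial : K) * l.factorial)) := by
  rw [mul_comm (k.factorial : K), div_factorial_succ_mul_factorial, mul_comm (l.factorial : K)]

end FactorialRatio

theorem LinearMap.comp_pow_succ_apply {R M : Type*} [Semiring R] [AddCommMonoid M] [Module R M]
    (P Q : M →ₗ[R] M) (n : ℕ) (v : M) :
    ((P ∘ₗ Q) ^ (n + 1)) v = P (Q (((P ∘ₗ Q) ^ n) v)) := by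
  rw [pow_succ', Module.End.mul_apply, LinearMap.comp_apply]

/-- The double power series recurrence
`A_{k+1,ℓ} = P C_{k,ℓ}/(k+1)`, `C_{k,ℓ+1} = −Q A_{k,ℓ}/(ℓ+1)` of the
h-submonogenic system is solved by
`A_{k,ℓ} = ((−1)^k (ℓ−k)!/(k!ℓ!)) (P∘Q)^k a_{ℓ−k}` for `k ≤ ℓ`,
`A_{k,ℓ} = ((−1)^ℓ (k−1−ℓ)!/(k!ℓ!)) P((Q∘P)^ℓ c_{k−1−ℓ})` for `ℓ < k`,
`C_{k,ℓ} = ((−1)^ℓ (k−ℓ)!/(k!ℓ!)) (Q∘P)^ℓ c_{k−ℓ}` for `ℓ ≤ k`,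
`C_{k,ℓ} = ((−1)^{k+1} (ℓ−1−k)!/(k!ℓ!)) Q((P∘Q)^k a_{ℓ−1−k})` for `k < ℓ`,
with `A_{0,ℓ} = a_ℓ` and `C_{k,0} = c_k`. -/
theorem double_power_series_recurrence {V : Type*} [AddCommGroup V] [Module ℂ V]
    (P Q : V →ₗ[ℂ] V) (a c : ℕ → V)
    (A C : ℕ → ℕ → V)
    (hA1 : ∀ k l, k ≤ l → A k l = (((-1 : ℂ) ^ k * ((l - k).factorial : ℂ)) /
      ((k.factorial : ℂ) * (l.factorial : ℂ))) • ((P ∘ₗ Q) ^ k) (a (l - k)))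
    (hA2 : ∀ k l, l < k → A k l = (((-1 : ℂ) ^ l * ((k - 1 - l).factorial : ℂ)) /
      ((k.factorial : ℂ) * (l.factorial : ℂ))) • P (((Q ∘ₗ P) ^ l) (c (k - 1 - l))))
    (hC1 : ∀ k l, l ≤ k → C k l = (((-1 : ℂ) ^ l * ((k - l).factorial : ℂ)) /
      ((k.factorial : ℂ) * (l.factorial : ℂ))) • ((Q ∘ₗ P) ^ l) (c (k - l)))
    (hC2 : ∀ k l, k < l → C k l = (((-1 : ℂ) ^ (k + 1) * ((l - 1 - k).factorial : ℂ)) /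
      ((k.factorial : ℂ) * (l.factorial : ℂ))) • Q (((P ∘ₗ Q) ^ k) (a (l - 1 - k)))) :
    (∀ l, A 0 l = a l) ∧ (∀ k, C k 0 = c k) ∧
    (∀ k l, A (k + 1) l = (((k : ℂ) + 1)⁻¹) • P (C k l)) ∧
    (∀ k l, C k (l + 1) = -(((l : ℂ) + 1)⁻¹) • Q (A k l)) := by
  refine ⟨fun l ↦ ?_, fun k ↦ ?_, fun k l ↦ ?_, fun k l ↦ ?_⟩
  · simp [hA1 0 l l.zero_le, Nat.factorial_ne_zero]
  · simp [hC1 k 0 k.zero_le, Nat.factorial_ne_zero]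
  · rcases le_or_gt l k with hlk | hkl
    · rw [hA2 (k + 1) l (by omega), hC1 k l hlk, Nat.add_sub_cancel, map_smul, smul_smul,
        div_factorial_succ_mul_factorial]
    · rw [hA1 (k + 1) l hkl, hC2 k l hkl, show l - (k + 1) = l - 1 - k by omega,
        LinearMap.comp_pow_succ_apply, map_smul, smul_smul, div_factorial_succ_mul_factorial]
  · rcases le_or_gt k l with hkl | hlk
    · rw [hC2 k (l + 1) (by omega), hA1 k l hkl, Nat.add_sub_cancel, map_smul, smul_smul,
        div_factorial_mul_factorial_succ, pow_succ]
      congr 1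
      ring
    · rw [hC1 k (l + 1) hlk, hA2 k l hlk, show k - (l + 1) = k - 1 - l by omega,
        LinearMap.comp_pow_succ_apply, map_smul, smul_smul, div_factorial_mul_factorial_succ,
        pow_succ]
      congr 1
      ring
end

section
/- Let c : ℝ → ℂ be a differentiable function, and define F : ℝ^{2n} → 𝒞 by F(x,y) = c(|z|²)·𝐳(z), where z_j = x_j + i y_j, |z|² = Σ_{j=1}^n (x_j² + y_j²), and 𝐳(z) = Σ_{j=1}^n z_j f_j. Then F is differentiable and at every point ∂_z F = c(|z|²)·β + c′(|z|²)·𝐳†(z)𝐳(z), where β = Σ_{j=1}^n f_j† f_j and 𝐳†(z) = Σ_{j=1}^n conj(z_j) f_j†. -/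
noncomputable section

/-- The domain `ℝ^{2n}`, with coordinates written `(x_1,…,x_n,y_1,…,y_n)`. -/
abbrev Dom (n : ℕ) : Type := (Fin n → ℝ) × (Fin n → ℝ)

/-- The coordinate direction `x_j`. -/
def ex (n : ℕ) (j : Fin n) : Dom n := (Pi.single j 1, 0)

/-- The coordinate direction `y_j`. -/
def ey (n : ℕ) (j : Fin n) : Dom n := (0, Pi.single j 1)

/-- The complex coordinates `z_j = x_j + i y_j` of a point. -/
def zc (n : ℕ) (pt : Dom n) : Fin n → ℂ := fun j => (pt.1 j : ℂ) + Complex.I * (pt.2 j : ℂ)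

/-- `ν = |z|² = ∑ (x_j² + y_j²)`. -/
def nu (n : ℕ) (pt : Dom n) : ℝ := ∑ j, ((pt.1 j) ^ 2 + (pt.2 j) ^ 2)

/-- `g' pt v` is the directional (line) derivative of the Clifford-algebra valued
function `g` at `pt` in the direction `v`, tested against all `ℂ`-linear
functionals (an equivalent description of differentiability, as the Clifford
algebra is a finite-dimensional complex vector space). -/
def IsWeakLineDeriv (n : ℕ) (g : Dom n → Cl (2 * n))
    (g' : Dom n → Dom n → Cl (2 * n)) : Prop :=
  ∀ φ : Module.Dual ℂ (Cl (2 * n)), ∀ pt v,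
    HasLineDerivAt ℝ (fun q => φ (g q)) (φ (g' pt v)) pt v

/-- The Hermitian Dirac operator `∂_z F = ∑_j f_j† (1/2)(∂_{x_j} F − i ∂_{y_j} F)`
expressed through the (directional) derivative `F'` of `F`. -/
def DzOf (n : ℕ) (F' : Dom n → Dom n → Cl (2 * n)) (pt : Dom n) : Cl (2 * n) :=
  ∑ j, fwd n j * ((2⁻¹ : ℂ) • (F' pt (ex n j) - Complex.I • F' pt (ey n j)))

/-- The Hermitian Dirac operator `∂_z† F = ∑_j f_j (1/2)(∂_{x_j} F + i ∂_{y_j} F)`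
expressed through the (directional) derivative `F'` of `F`. -/
def DzdOf (n : ℕ) (F' : Dom n → Dom n → Cl (2 * n)) (pt : Dom n) : Cl (2 * n) :=
  ∑ j, fw n j * ((2⁻¹ : ℂ) • (F' pt (ex n j) + Complex.I • F' pt (ey n j)))

/-! Along a line `p + t v`, any linear functional of `F` is the product of `c ∘ ν`, with
derivative `2⟨p, v⟩ c′(ν)`, and of an `ℝ`-linear function of the point, so the product rule
gives the directional derivative. In the Wirtinger combination `½(∂_{x_j} − i ∂_{y_j})` the
first factor yields `c′(ν) z̄_j 𝐳` and the second `c(ν) f_j`, because `𝐳(e_{x_j}) = f_j` and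
`𝐳(e_{y_j}) = i f_j`; multiplying by `f_j†` on the left and summing over `j` produces
`c′(ν) 𝐳†𝐳 + c(ν) β`. -/

section LineDeriv

variable {E G : Type*} [AddCommGroup E] [Module ℝ E] [NormedAddCommGroup G] [NormedSpace ℝ G]
  {x v : E}

theorem LinearMap.hasLineDerivAt (ψ : E →ₗ[ℝ] G) (x v : E) : HasLineDerivAt ℝ ψ (ψ v) x v := by
  have hline : (fun t : ℝ => ψ (x + t • v)) = fun t => ψ x + t • ψ v := by
    funext t
    rw [map_add, map_smul]
  change HasDerivAt _ _ 0
  rw [hline]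
  simpa using ((hasDerivAt_id (0 : ℝ)).smul_const (ψ v)).const_add (ψ x)

theorem HasLineDerivAt.mul {𝔸 : Type*} [NormedRing 𝔸] [NormedAlgebra ℝ 𝔸] {f g : E → 𝔸}
    {f' g' : 𝔸} (hf : HasLineDerivAt ℝ f f' x v) (hg : HasLineDerivAt ℝ g g' x v) :
    HasLineDerivAt ℝ (fun q => f q * g q) (f' * g x + f x * g') x v := by
  have hfg := HasDerivAt.mul hf hg
  simp only [zero_smul, add_zero] at hfg
  exact hfg

theorem HasDerivAt.comp_hasLineDerivAt {c : ℝ → G} {c' : G} {g : E → ℝ} {g' : ℝ}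
    (hc : HasDerivAt c c' (g x)) (hg : HasLineDerivAt ℝ g g' x v) :
    HasLineDerivAt ℝ (fun q => c (g q)) (g' • c') x v := by
  have hc0 : HasDerivAt c c' (g (x + (0 : ℝ) • v)) := by simpa using hc
  exact hc0.scomp (0 : ℝ) hg

end LineDeriv

section Coordinates

variable (n : ℕ)

theorem zc_add (p q : Dom n) : zc n (p + q) = zc n p + zc n q := by
  funext j
  simp only [zc, Prod.fst_add, Prod.snd_add, Pi.add_apply, Complex.ofReal_add]
  ring

theorem zc_smul (t : ℝ) (p : Dom n) : zc n (t • p) = (t : ℂ) • zc n p := by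
  funext j
  simp only [zc, Prod.smul_fst, Prod.smul_snd, Pi.smul_apply, smul_eq_mul,
    Complex.ofReal_mul]
  ring

theorem zc_ex (j : Fin n) : zc n (ex n j) = Pi.single j 1 := by
  funext k
  by_cases h : k = j <;> simp [zc, ex, h]

theorem zc_ey (j : Fin n) : zc n (ey n j) = Pi.single j Complex.I := by
  funext k
  by_cases h : k = j <;> simp [zc, ey, h]

theorem conj_zc (p : Dom n) (j : Fin n) :
    starRingEnd ℂ (zc n p j) = (p.1 j : ℂ) - Complex.I * p.2 j := by
  simp only [zc, map_add, map_mul, Complex.conj_ofReal, Complex.conj_I]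
  ring

theorem zvec_add (z w : Fin n → ℂ) : zvec n (z + w) = zvec n z + zvec n w := by
  simp only [zvec, Pi.add_apply, add_smul, Finset.sum_add_distrib]

theorem zvec_smul (a : ℂ) (z : Fin n → ℂ) : zvec n (a • z) = a • zvec n z := by
  simp only [zvec, Pi.smul_apply, smul_eq_mul, Finset.smul_sum, smul_smul]

theorem zvec_single (j : Fin n) (a : ℂ) : zvec n (Pi.single j a) = a • fw n j := by
  rw [zvec, Finset.sum_eq_single j (fun k _ hk => by simp [hk]) (by simp)]
  simp

def zvecLinear : Dom n →ₗ[ℝ] Cl (2 * n) where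
  toFun p := zvec n (zc n p)
  map_add' p q := by rw [zc_add, zvec_add]
  map_smul' t p := by rw [zc_smul, zvec_smul]; rfl

def dotDom (p q : Dom n) : ℝ := ∑ j, (p.1 j * q.1 j + p.2 j * q.2 j)

theorem dotDom_ex (p : Dom n) (j : Fin n) : dotDom n p (ex n j) = p.1 j := by
  simp [dotDom, ex, Pi.single_apply]

theorem dotDom_ey (p : Dom n) (j : Fin n) : dotDom n p (ey n j) = p.2 j := by
  simp [dotDom, ey, Pi.single_apply]

theorem hasLineDerivAt_nu (p v : Dom n) : HasLineDerivAt ℝ (nu n) (2 * dotDom n p v) p v := by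
  change HasDerivAt (fun t : ℝ => ∑ j, ((p + t • v).1 j ^ 2 + (p + t • v).2 j ^ 2)) _ 0
  simp only [Prod.fst_add, Prod.snd_add, Prod.smul_fst, Prod.smul_snd, Pi.add_apply,
    Pi.smul_apply, smul_eq_mul]
  have hsq : ∀ a b : ℝ, HasDerivAt (fun t : ℝ => (a + t * b) ^ 2) (2 * (a * b)) 0 := by
    intro a b
    simpa [mul_assoc] using (((hasDerivAt_id (0 : ℝ)).mul_const b).const_add a).fun_pow 2
  rw [dotDom, Finset.mul_sum]
  refine HasDerivAt.fun_sum fun j _ => ?_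
  simpa [mul_add] using (hsq (p.1 j) (v.1 j)).fun_add (hsq (p.2 j) (v.2 j))

end Coordinates

section RadialZvec

variable (c : ℝ → ℂ) (n : ℕ)

def radialZvecDeriv (p v : Dom n) : Cl (2 * n) :=
  ((2 * dotDom n p v) • deriv c (nu n p)) • zvec n (zc n p) + c (nu n p) • zvec n (zc n v)

theorem isWeakLineDeriv_radialZvec (hc : Differentiable ℝ c) :
    IsWeakLineDeriv n (fun p => c (nu n p) • zvec n (zc n p)) (radialZvecDeriv c n) := by
  intro φ p v
  have h := ((hc (nu n p)).hasDerivAt.comp_hasLineDerivAt (hasLineDerivAt_nu n p v)).mul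
    ((φ.restrictScalars ℝ ∘ₗ zvecLinear n).hasLineDerivAt p v)
  simpa [radialZvecDeriv, zvecLinear, smul_eq_mul] using h

theorem wirtinger_radialZvecDeriv (p : Dom n) (j : Fin n) :
    (2⁻¹ : ℂ) • (radialZvecDeriv c n p (ex n j) - Complex.I • radialZvecDeriv c n p (ey n j)) =
      (deriv c (nu n p) * starRingEnd ℂ (zc n p j)) • zvec n (zc n p) + c (nu n p) • fw n j := by
  simp only [radialZvecDeriv, dotDom_ex, dotDom_ey, zc_ex, zc_ey, zvec_single, one_smul,
    conj_zc, Complex.real_smul]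
  linear_combination (norm := module) (-(2⁻¹ : ℂ) * c (nu n p)) • Complex.I_mul_I • fw n j

theorem DzOf_radialZvecDeriv (p : Dom n) :
    DzOf n (radialZvecDeriv c n) p =
      c (nu n p) • beta n + deriv c (nu n p) • (zvecd n (zc n p) * zvec n (zc n p)) := by
  simp only [DzOf, wirtinger_radialZvecDeriv, mul_add, mul_smul_comm, Finset.sum_add_distrib,
    beta, zvecd, Finset.smul_sum, Finset.sum_mul, smul_mul_assoc, smul_smul]
  exact add_comm _ _

end RadialZvec

theorem Dz_of_c_zvec_general (n : ℕ) (c : ℝ → ℂ) (hc : Differentiable ℝ c)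
    (F : Dom n → Cl (2 * n)) (hF : ∀ pt, F pt = c (nu n pt) • zvec n (zc n pt)) :
    ∃ F' : Dom n → Dom n → Cl (2 * n), IsWeakLineDeriv n F F' ∧
      ∀ pt, DzOf n F' pt =
        c (nu n pt) • beta n +
          deriv c (nu n pt) • (zvecd n (zc n pt) * zvec n (zc n pt)) := by
  obtain rfl : F = fun p => c (nu n p) • zvec n (zc n p) := funext hF
  exact ⟨radialZvecDeriv c n, isWeakLineDeriv_radialZvec c n hc, DzOf_radialZvecDeriv c n⟩

/-- For differentiable `c : ℝ → ℂ` and `F = c(|z|²)·𝐳`, the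
function `F` is differentiable and `∂_z F = c(|z|²)·β + c′(|z|²)·𝐳†𝐳`. -/
theorem Dz_of_c_zvec (n : ℕ) (hn : 1 ≤ n) (c : ℝ → ℂ) (hc : Differentiable ℝ c)
    (F : Dom n → Cl (2 * n)) (hF : ∀ pt, F pt = c (nu n pt) • zvec n (zc n pt)) :
    ∃ F' : Dom n → Dom n → Cl (2 * n), IsWeakLineDeriv n F F' ∧
      ∀ pt, DzOf n F' pt =
        c (nu n pt) • beta n +
          deriv c (nu n pt) • (zvecd n (zc n pt) * zvec n (zc n pt)) :=
  Dz_of_c_zvec_general n c hc F hF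
end
end

section
/- Let n ≥ 1 be a natural number, λ, μ nonzero real numbers, and ℓ ∈ ℂ. Let c : ℝ → ℂ be twice differentiable and define a₁ = (ℓ/λ)·c and a₂ = (1/λ)·c′. If for all ν ∈ ℝ one has a₁′(ν) + ν·a₂′(ν) + μ·c(ν) = (ℓ − n − 1)·a₂(ν), then c satisfies the Bessel-type ordinary differential equation ν·c″(ν) + (n+1)·c′(ν) + λμ·c(ν) = 0 for all ν ∈ ℝ. -/
/-- Multiplying by `lam` makes the `l * c₁` terms on the two sides cancel. -/
theorem bessel_relation_of_ansatz_relation {K : Type*} [Field K] {lam mu l N ν c₀ c₁ c₂ : K}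
    (hlam : lam ≠ 0)
    (h : l / lam * c₁ + ν * (1 / lam * c₂) + mu * c₀ = (l - N - 1) * (1 / lam * c₁)) :
    ν * c₂ + (N + 1) * c₁ + lam * mu * c₀ = 0 := by
  field_simp at h
  linear_combination h

theorem exponential_ansatz_bessel_ode_general (n : ℕ)
    (lam mu : ℝ) (hlam : lam ≠ 0) (l : ℂ)
    (c : ℝ → ℂ)
    (a₁ a₂ : ℝ → ℂ)
    (ha₁ : ∀ ν, a₁ ν = (l / (lam : ℂ)) * c ν)
    (ha₂ : ∀ ν, a₂ ν = (1 / (lam : ℂ)) * deriv c ν)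
    (h : ∀ ν : ℝ, deriv a₁ ν + (ν : ℂ) * deriv a₂ ν + (mu : ℂ) * c ν =
      (l - (n : ℂ) - 1) * a₂ ν) :
    ∀ ν : ℝ, (ν : ℂ) * deriv (deriv c) ν + ((n : ℂ) + 1) * deriv c ν +
      ((lam : ℂ) * (mu : ℂ)) * c ν = 0 := by
  rw [funext ha₁, funext ha₂, deriv_const_mul_field', deriv_const_mul_field'] at h
  exact fun ν => bessel_relation_of_ansatz_relation (Complex.ofReal_ne_zero.mpr hlam) (h ν)

/-- The exponential-type ansatz reduction: if `a₁ = (ℓ/λ)c`,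
`a₂ = (1/λ)c′` satisfy `a₁′(ν) + ν a₂′(ν) + μ c(ν) = (ℓ − n − 1) a₂(ν)` for all
`ν`, then `c` satisfies the Bessel-type ODE `ν c″ + (n+1) c′ + λμ c = 0`. -/
theorem exponential_ansatz_bessel_ode (n : ℕ) (hn : 1 ≤ n)
    (lam mu : ℝ) (hlam : lam ≠ 0) (hmu : mu ≠ 0) (l : ℂ)
    (c : ℝ → ℂ) (hc : Differentiable ℝ c) (hc' : Differentiable ℝ (deriv c))
    (a₁ a₂ : ℝ → ℂ)
    (ha₁ : ∀ ν, a₁ ν = (l / (lam : ℂ)) * c ν)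
    (ha₂ : ∀ ν, a₂ ν = (1 / (lam : ℂ)) * deriv c ν)
    (h : ∀ ν : ℝ, deriv a₁ ν + (ν : ℂ) * deriv a₂ ν + (mu : ℂ) * c ν =
      (l - (n : ℂ) - 1) * a₂ ν) :
    ∀ ν : ℝ, (ν : ℂ) * deriv (deriv c) ν + ((n : ℂ) + 1) * deriv c ν +
      ((lam : ℂ) * (mu : ℂ)) * c ν = 0 :=
  exponential_ansatz_bessel_ode_general n lam mu hlam l c a₁ a₂ ha₁ ha₂ h
end

section
/- Let n ≥ 1 and p ≥ 0 be natural numbers and let G : ℝ^{2n} → ℝ be the Gaussian G(x,y) = exp(−(1/2)Σ_{j=1}^n (x_j² + y_j²)). Then, with Δ = Σ_{j=1}^n (∂²_{x_j} + ∂²_{y_j}) applied p times, the Rodrigues-type formula holds at every point: ∂_z†(Δ^p G) = −(1/2)(−2)^p p! · L_p^{(n)}(|z|²/2) · 𝐳(z) · G(x,y), where z_j = x_j + i y_j, |z|² = Σ_{j=1}^n (x_j²+y_j²), 𝐳(z) = Σ_{j=1}^n z_j f_j, and L_p^{(n)} is the generalized Laguerre polynomial. (In the paper's notation this says H^{(1)}_{2p+1}(𝐳,𝐳†)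 = (−1)^{p−1} 2^{p−1} p! 𝐳 L_p^n(|𝐳|²/2), where H^{(1)}_{2p+1}(𝐳,𝐳†) e^{−|𝐳|²/2} = ∂_{𝐳†} Δ^p e^{−|𝐳|²/2}.) -/
noncomputable section

/-- The partial derivative `∂_{x_j}`. -/
def pdx {E : Type*} [NormedAddCommGroup E] [NormedSpace ℝ E] (n : ℕ) (j : Fin n)
    (f : Dom n → E) : Dom n → E := fun pt => fderiv ℝ f pt (ex n j)

/-- The partial derivative `∂_{y_j}`. -/
def pdy {E : Type*} [NormedAddCommGroup E] [NormedSpace ℝ E] (n : ℕ) (j : Fin n)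
    (f : Dom n → E) : Dom n → E := fun pt => fderiv ℝ f pt (ey n j)

/-- The Laplacian `Δ = ∑_j (∂²_{x_j} + ∂²_{y_j})` on scalar functions. -/
def Lap (n : ℕ) (f : Dom n → ℝ) : Dom n → ℝ :=
  fun pt => ∑ j, (pdx n j (pdx n j f) pt + pdy n j (pdy n j f) pt)

/-- The Hermitian Dirac operator `∂_z† g = ∑_j f_j (1/2)(∂_{x_j} g + i ∂_{y_j} g)`
applied to a scalar-valued function `g`. -/
def DzdScalar (n : ℕ) (g : Dom n → ℂ) (pt : Dom n) : Cl (2 * n) :=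
  ∑ j, ((2⁻¹ : ℂ) * (pdx n j g pt + Complex.I * pdy n j g pt)) • fw n j

/-- The generalized Laguerre polynomial `L_p^{(α)}(x) = ∑_{k=0}^p (−1)^k C(p+α, p−k) x^k/k!`. -/
def Laguerre (p α : ℕ) (x : ℂ) : ℂ :=
  ∑ k ∈ Finset.range (p + 1),
    (-1 : ℂ) ^ k * ((p + α).choose (p - k) : ℂ) * x ^ k / (k.factorial : ℂ)

/-- The Gaussian `G(x,y) = exp(−(1/2)∑(x_j² + y_j²))`. -/
def Gauss (n : ℕ) : Dom n → ℝ := fun pt => Real.exp (-(1 / 2) * nu n pt)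

/-! Every `Δ^p G` is radial, `F(ν)` with `ν = |z|²`, and on radial functions
`Δ F(ν) = 4ν F''(ν) + 4n F'(ν)` while `∂_z† F(ν) = F'(ν) 𝐳`. Writing radial functions as
`f(ν/2) e^{-ν/2}` with `f` a polynomial, `d/dν` becomes `f ↦ -(f - f')/2`, and
`L_p^{(α)} - L_p^{(α)}' = L_p^{(α+1)}`. Together with the three-term relation
`(p+1) L_{p+1}^{(α)} = (α+1) L_p^{(α+1)} - x L_p^{(α+2)}` this gives, by induction on `p`,
`Δ^p G = (-2)^p p! L_p^{(n-1)}(ν/2) G`, and one more derivative gives the formula. -/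

open Polynomial

def nuPolar (n : ℕ) (a : Dom n) : Dom n →L[ℝ] ℝ :=
  ∑ j, ((2 * a.1 j) • (ContinuousLinearMap.proj j).comp (ContinuousLinearMap.fst ℝ _ _)
    + (2 * a.2 j) • (ContinuousLinearMap.proj j).comp (ContinuousLinearMap.snd ℝ _ _))

lemma nuPolar_apply (n : ℕ) (a b : Dom n) :
    nuPolar n a b = ∑ j, 2 * (a.1 j * b.1 j + a.2 j * b.2 j) := by
  simp only [nuPolar, sum_apply, add_apply, smul_apply, ContinuousLinearMap.comp_apply,
    ContinuousLinearMap.coe_fst', ContinuousLinearMap.coe_snd', ContinuousLinearMap.proj_apply,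
    smul_eq_mul]
  exact Finset.sum_congr rfl fun j _ => by ring

lemma nuPolar_comm (n : ℕ) (a b : Dom n) : nuPolar n a b = nuPolar n b a := by
  simp only [nuPolar_apply, mul_comm (a.1 _), mul_comm (a.2 _)]

lemma nuPolar_ex (n : ℕ) (a : Dom n) (j : Fin n) : nuPolar n a (ex n j) = 2 * a.1 j := by
  simp [nuPolar_apply, ex, Pi.single_apply]

lemma nuPolar_ey (n : ℕ) (a : Dom n) (j : Fin n) : nuPolar n a (ey n j) = 2 * a.2 j := by
  simp [nuPolar_apply, ey, Pi.single_apply]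

lemma hasFDerivAt_nu (n : ℕ) (pt : Dom n) : HasFDerivAt (nu n) (nuPolar n pt) pt := by
  have hx (j : Fin n) := (((ContinuousLinearMap.proj j).comp
    (ContinuousLinearMap.fst ℝ (Fin n → ℝ) (Fin n → ℝ))).hasFDerivAt (x := pt)).pow 2
  have hy (j : Fin n) := (((ContinuousLinearMap.proj j).comp
    (ContinuousLinearMap.snd ℝ (Fin n → ℝ) (Fin n → ℝ))).hasFDerivAt (x := pt)).pow 2
  refine (HasFDerivAt.fun_sum (u := Finset.univ) fun j _ => (hx j).add (hy j)).congr_fderiv ?_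
  simp [nuPolar]

lemma fderiv_comp_nu_apply {E : Type*} [NormedAddCommGroup E] [NormedSpace ℝ E] {n : ℕ}
    {F : ℝ → E} {F' : E} {pt : Dom n} (hF : HasDerivAt F F' (nu n pt)) (v : Dom n) :
    fderiv ℝ (fun q => F (nu n q)) pt v = nuPolar n pt v • F' := by
  have h : HasFDerivAt (fun q => F (nu n q)) _ pt := hF.hasFDerivAt.comp pt (hasFDerivAt_nu n pt)
  simp only [h.fderiv, ContinuousLinearMap.comp_apply, ContinuousLinearMap.toSpanSingleton_apply]

lemma fderiv_fderiv_comp_nu_apply {n : ℕ} {F F' F'' : ℝ → ℝ}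
    (hF : ∀ t, HasDerivAt F (F' t) t) (hF' : ∀ t, HasDerivAt F' (F'' t) t) (pt v : Dom n) :
    fderiv ℝ (fun q => fderiv ℝ (fun q => F (nu n q)) q v) pt v
      = nuPolar n pt v ^ 2 * F'' (nu n pt) + nuPolar n v v * F' (nu n pt) := by
  have hfirst : (fun q => fderiv ℝ (fun q => F (nu n q)) q v)
      = fun q => F' (nu n q) * nuPolar n v q := by
    funext q
    rw [fderiv_comp_nu_apply (hF _), nuPolar_comm, smul_eq_mul, mul_comm]
  have h : HasFDerivAt (fun q => F' (nu n q) * nuPolar n v q) _ pt :=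
    ((hF' (nu n pt)).hasFDerivAt.comp pt (hasFDerivAt_nu n pt)).mul (nuPolar n v).hasFDerivAt
  rw [hfirst, h.fderiv]
  simp only [add_apply, smul_apply, ContinuousLinearMap.comp_apply,
    ContinuousLinearMap.toSpanSingleton_apply, Function.comp_apply, smul_eq_mul,
    nuPolar_comm n v pt]
  ring

lemma lap_comp_nu {n : ℕ} {F F' F'' : ℝ → ℝ}
    (hF : ∀ t, HasDerivAt F (F' t) t) (hF' : ∀ t, HasDerivAt F' (F'' t) t) (pt : Dom n) :
    Lap n (fun q => F (nu n q)) pt = 4 * nu n pt * F'' (nu n pt) + 4 * n * F' (nu n pt) := by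
  unfold Lap pdx pdy
  simp only [fderiv_fderiv_comp_nu_apply hF hF', nuPolar_ex, nuPolar_ey]
  simp only [ex, ey, Pi.single_eq_same]
  calc _ = ∑ j, (4 * (pt.1 j ^ 2 + pt.2 j ^ 2) * F'' (nu n pt) + 4 * F' (nu n pt)) :=
        Finset.sum_congr rfl fun j _ => by ring
    _ = _ := by
      rw [Finset.sum_add_distrib, ← Finset.sum_mul, ← Finset.mul_sum]
      simp only [Finset.sum_const, Finset.card_univ, Fintype.card_fin, nsmul_eq_mul, nu]
      ring

lemma dzdScalar_comp_nu {n : ℕ} {φ : ℝ → ℝ} {φ' : ℝ} {pt : Dom n}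
    (hφ : HasDerivAt φ φ' (nu n pt)) :
    DzdScalar n (fun q => (φ (nu n q) : ℂ)) pt = (φ' : ℂ) • zvec n (zc n pt) := by
  simp only [DzdScalar, pdx, pdy, fderiv_comp_nu_apply hφ.ofReal_comp, nuPolar_ex, nuPolar_ey,
    zvec, Finset.smul_sum, smul_smul, zc, Complex.real_smul]
  refine Finset.sum_congr rfl fun j _ => ?_
  push_cast
  congr 1
  ring

/-- Indexed by `choose (p + α) (α + k)` rather than `choose (p + α) (p - k)`: the two agree for
`k ≤ p`, but this form has no truncated subtraction and vanishes for `k > p`. -/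
def laguerre (p α : ℕ) : ℝ[X] :=
  ∑ k ∈ Finset.range (p + 1),
    C ((-1) ^ k * ((p + α).choose (α + k) : ℝ) / k.factorial) * X ^ k

lemma coeff_laguerre (p α k : ℕ) :
    (laguerre p α).coeff k = (-1) ^ k * ((p + α).choose (α + k) : ℝ) / k.factorial := by
  simp only [laguerre, finsetSum_coeff, coeff_C_mul_X_pow, Finset.sum_ite_eq, Finset.mem_range]
  split_ifs with hk
  · rfl
  · rw [Nat.choose_eq_zero_of_lt (by omega)]
    simp

lemma laguerre_sub_derivative (p α : ℕ) :
    laguerre p α - derivative (laguerre p α) = laguerre p (α + 1) := by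
  ext k
  have hpascal : (p + (α + 1)).choose (α + 1 + k)
      = (p + α).choose (α + k) + (p + α).choose (α + k + 1) := by
    rw [show p + (α + 1) = p + α + 1 by omega, show α + 1 + k = α + k + 1 by omega,
      Nat.choose_succ_succ']
  simp only [coeff_sub, coeff_derivative, coeff_laguerre, hpascal, Nat.factorial_succ,
    show α + (k + 1) = α + k + 1 by omega]
  push_cast
  field_simp
  ring

lemma succ_mul_choose_eq_laguerre (p α k : ℕ) :
    (p + 1) * (p + α + 1).choose (α + k) = (α + 1) * (p + α + 1).choose (α + k + 1)
      + k * (p + α + 2).choose (α + k + 1) := by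
  have hsucc := Nat.choose_succ_right_eq (p + α + 1) (α + k)
  rw [Nat.choose_succ_succ' (p + α + 1)]
  rcases le_or_gt k (p + 1) with hk | hk
  · obtain ⟨r, hr⟩ : ∃ r, p + 1 = k + r := ⟨p + 1 - k, by omega⟩
    rw [show p + α + 1 - (α + k) = r by omega] at hsucc
    have hC := congrArg (· * (p + α + 1).choose (α + k)) hr
    linarith
  · rw [Nat.choose_eq_zero_of_lt (by omega), Nat.choose_eq_zero_of_lt (by omega)]
    simp

lemma succ_mul_laguerre_succ (p α : ℕ) :
    C ((p : ℝ) + 1) * laguerre (p + 1) α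
      = C ((α : ℝ) + 1) * laguerre p (α + 1) - X * laguerre p (α + 2) := by
  ext k
  have hcoeff : ((p : ℝ) + 1) * ((p + α + 1).choose (α + k) : ℝ)
      = ((α : ℝ) + 1) * ((p + α + 1).choose (α + k + 1) : ℝ)
        + k * ((p + α + 2).choose (α + k + 1) : ℝ) := by
    exact_mod_cast succ_mul_choose_eq_laguerre p α k
  have hp : p + 1 + α = p + α + 1 := by omega
  rcases k with _ | k
  · simp only [coeff_C_mul, coeff_sub, coeff_X_mul_zero, coeff_laguerre, hp]
    simp only [add_zero, CharP.cast_eq_zero, zero_mul, pow_zero, one_mul, Nat.factorial_zero,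
      Nat.cast_one, div_one, sub_zero] at hcoeff ⊢
    linear_combination hcoeff
  · simp only [coeff_C_mul, coeff_sub, coeff_X_mul, coeff_laguerre, hp, Nat.factorial_succ,
      show p + (α + 1) = p + α + 1 by omega, show p + (α + 2) = p + α + 2 by omega,
      show α + 1 + (k + 1) = α + (k + 1) + 1 by omega,
      show α + 2 + k = α + (k + 1) + 1 by omega]
    push_cast at hcoeff ⊢
    field_simp
    linear_combination (-1) ^ (k + 1) * hcoeff

lemma ofReal_eval_laguerre (p α : ℕ) (x : ℝ) :
    (((laguerre p α).eval x : ℝ) : ℂ) = Laguerre p α x := by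
  simp only [laguerre, Laguerre, eval_finsetSum, eval_mul, eval_C, eval_pow, eval_X]
  push_cast
  refine Finset.sum_congr rfl fun k hk => ?_
  rw [Nat.choose_symm_of_eq_add (show p + α = p - k + (α + k) by
    have := Finset.mem_range.mp hk; omega)]
  ring

def gaussProfile (f : ℝ[X]) (t : ℝ) : ℝ := f.eval (t / 2) * Real.exp (-(t / 2))

lemma hasDerivAt_gaussProfile (f : ℝ[X]) (t : ℝ) :
    HasDerivAt (gaussProfile f) (-gaussProfile (f - derivative f) t / 2) t := by
  have hhalf : HasDerivAt (fun t : ℝ => t / 2) (1 / 2) t := (hasDerivAt_id t).div_const 2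
  refine (((f.hasDerivAt (t / 2)).comp t hhalf).mul hhalf.neg.exp).congr_deriv ?_
  simp only [gaussProfile, eval_sub, Function.comp_apply, Pi.neg_apply]
  ring

lemma hasDerivAt_gaussProfile_laguerre (p α : ℕ) (t : ℝ) :
    HasDerivAt (gaussProfile (laguerre p α)) (-gaussProfile (laguerre p (α + 1)) t / 2) t := by
  simpa [laguerre_sub_derivative] using hasDerivAt_gaussProfile (laguerre p α) t

lemma gaussProfile_laguerre_succ (p α : ℕ) (t : ℝ) :
    ((p : ℝ) + 1) * gaussProfile (laguerre (p + 1) α) t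
      = (α + 1) * gaussProfile (laguerre p (α + 1)) t
        - t / 2 * gaussProfile (laguerre p (α + 2)) t := by
  have h := congrArg (eval (t / 2)) (succ_mul_laguerre_succ p α)
  simp only [eval_mul, eval_sub, eval_C, eval_X] at h
  simp only [gaussProfile]
  linear_combination Real.exp (-(t / 2)) * h

lemma lap_gaussProfile_laguerre (α p : ℕ) (c : ℝ) (pt : Dom (α + 1)) :
    Lap (α + 1) (fun q => c * gaussProfile (laguerre p α) (nu (α + 1) q)) pt
      = -2 * (p + 1) * c * gaussProfile (laguerre (p + 1) α) (nu (α + 1) pt) := by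
  have hF (t : ℝ) : HasDerivAt (fun t => c * gaussProfile (laguerre p α) t)
      (c * (-gaussProfile (laguerre p (α + 1)) t / 2)) t :=
    (hasDerivAt_gaussProfile_laguerre p α t).const_mul c
  have hF' (t : ℝ) : HasDerivAt (fun t => c * (-gaussProfile (laguerre p (α + 1)) t / 2))
      (c * (gaussProfile (laguerre p (α + 2)) t / 4)) t :=
    (((hasDerivAt_gaussProfile_laguerre p (α + 1) t).neg.div_const 2).const_mul c).congr_deriv
      (by ring)
  rw [lap_comp_nu hF hF']
  push_cast
  linear_combination (2 * c) * gaussProfile_laguerre_succ p α (nu (α + 1) pt)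

lemma iterate_lap_gauss (α p : ℕ) :
    (Lap (α + 1))^[p] (Gauss (α + 1))
      = fun pt => (-2) ^ p * p.factorial * gaussProfile (laguerre p α) (nu (α + 1) pt) := by
  induction p with
  | zero =>
    funext pt
    simp [Gauss, gaussProfile, laguerre, div_eq_inv_mul]
  | succ p ih =>
    funext pt
    rw [Function.iterate_succ_apply', ih, lap_gaussProfile_laguerre, Nat.factorial_succ]
    push_cast
    ring

/-- The Rodrigues-type formula
`∂_z†(Δ^p G) = −(1/2)(−2)^p p! L_p^{(n)}(|z|²/2) 𝐳 G`, i.e. in the paper's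
notation `H^{(1)}_{2p+1}(𝐳,𝐳†) = (−1)^{p−1} 2^{p−1} p! 𝐳 L_p^n(|𝐳|²/2)`. -/
theorem rodrigues_hermite_laguerre (n : ℕ) (hn : 1 ≤ n) (p : ℕ) :
    ∀ pt : Dom n,
      DzdScalar n (fun q => (((Lap n)^[p] (Gauss n)) q : ℂ)) pt =
        (-(2⁻¹ : ℂ) * (-2 : ℂ) ^ p * (p.factorial : ℂ) *
            Laguerre p n (((nu n pt : ℂ)) / 2) * (Gauss n pt : ℂ)) •
          zvec n (zc n pt) := by
  obtain ⟨α, rfl⟩ : ∃ α, n = α + 1 := ⟨n - 1, by omega⟩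
  intro pt
  rw [iterate_lap_gauss,
    dzdScalar_comp_nu (φ := fun t => (-2) ^ p * p.factorial * gaussProfile (laguerre p α) t)
      ((hasDerivAt_gaussProfile_laguerre p α _).const_mul _),
    show (nu (α + 1) pt : ℂ) / 2 = ((nu (α + 1) pt / 2 : ℝ) : ℂ) by push_cast; rfl,
    ← ofReal_eval_laguerre]
  simp only [gaussProfile, Gauss]
  push_cast
  ring_nf
end
end

section
/- Let n ≥ 1 be a natural number, s ∈ ℝ, ℓ ∈ ℂ, and α₁, α₂ ∈ ℝ. Define a_{0,1}(ν) = α₁ ν^s and a_{0,2}(ν) = α₂ ν^{s−1} for ν > 0, and for k ≥ 0 define δ(k) = ((−1)^k ∏_{j=1}^k (s−j)(n+s−j) / ((k+1)(k!)²)) · ((ℓ−n−s)α₂ − α₁ s) ∈ ℂ and c_k : (0,∞) → ℂ, c_k(ν) = δ(k) ν^{s−k−1}. Then these functions solve the Hermitian Vekua recurrence for generalized powers: c_0(ν) = (ℓ−n−1)a_{0,2}(ν) − a_{0,1}′(ν) − ν a_{0,2}′(ν) for all ν > 0, and for every k ≥ 1 and all ν > 0, c_k(ν) = −(1/(k(k+1)))((n+1)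 c_{k−1}′(ν) + ν c_{k−1}″(ν)). Moreover, if s is a positive integer then δ(k) = 0 for all k ≥ s. -/
/-! Every `c_k` is a monomial `δ(k) ν^(s-k-1)`, and on a monomial `d ν^t` the operator
`(n + 1) ∂ + ν ∂²` acts as multiplication by `t (n + t)` while lowering the exponent by one. The
recurrence therefore reduces to the coefficient ratio
`δ(k+1) / δ(k) = -(s-k-1)(n+s-k-1) / ((k+1)(k+2))`, which is built into the product formula for `δ`.
When `s = m` is a positive integer, the `m`-th factor `s - m` of that product vanishes. -/

open Finset

section RpowMonomial

variable {ν : ℝ}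

theorem hasDerivAt_const_mul_ofReal_rpow (d : ℂ) (t : ℝ) (hν : ν ≠ 0) :
    HasDerivAt (fun x : ℝ => d * ((x ^ t : ℝ) : ℂ)) (d * t * ((ν ^ (t - 1) : ℝ) : ℂ)) ν := by
  simpa [mul_assoc] using
    ((Real.hasDerivAt_rpow_const (p := t) (Or.inl hν)).ofReal_comp).const_mul d

theorem deriv_const_mul_ofReal_rpow (d : ℂ) (t : ℝ) (hν : ν ≠ 0) :
    deriv (fun x : ℝ => d * ((x ^ t : ℝ) : ℂ)) ν = d * t * ((ν ^ (t - 1) : ℝ) : ℂ) :=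
  (hasDerivAt_const_mul_ofReal_rpow d t hν).deriv

theorem deriv_deriv_const_mul_ofReal_rpow (d : ℂ) (t : ℝ) (hν : ν ≠ 0) :
    deriv (deriv fun x : ℝ => d * ((x ^ t : ℝ) : ℂ)) ν
      = d * t * (t - 1) * ((ν ^ (t - 2) : ℝ) : ℂ) := by
  have hderiv : deriv (fun x : ℝ => d * ((x ^ t : ℝ) : ℂ))
      =ᶠ[nhds ν] fun x : ℝ => (d * t) * ((x ^ (t - 1) : ℝ) : ℂ) := by
    filter_upwards [eventually_ne_nhds hν] with x hx
    exact deriv_const_mul_ofReal_rpow d t hx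
  rw [hderiv.deriv_eq, deriv_const_mul_ofReal_rpow _ _ hν, sub_sub, one_add_one_eq_two]
  push_cast
  ring

theorem ofReal_mul_rpow_sub_one (t : ℝ) (hν : ν ≠ 0) :
    (ν : ℂ) * ((ν ^ (t - 1) : ℝ) : ℂ) = ((ν ^ t : ℝ) : ℂ) := by
  rw [← Complex.ofReal_mul, Real.rpow_sub_one hν, mul_div_cancel₀ _ hν]

theorem radial_operator_const_mul_ofReal_rpow (N d : ℂ) (t : ℝ) (hν : ν ≠ 0) :
    (N + 1) * deriv (fun x : ℝ => d * ((x ^ t : ℝ) : ℂ)) ν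
        + ν * deriv (deriv fun x : ℝ => d * ((x ^ t : ℝ) : ℂ)) ν
      = d * t * (N + t) * ((ν ^ (t - 1) : ℝ) : ℂ) := by
  rw [deriv_const_mul_ofReal_rpow d t hν, deriv_deriv_const_mul_ofReal_rpow d t hν,
    ← ofReal_mul_rpow_sub_one (t - 1) hν, show t - 1 - 1 = t - 2 by ring]
  ring

end RpowMonomial

section Coefficients

variable (n : ℕ) (s : ℝ) (C : ℂ)

noncomputable def vekuaCoeff (k : ℕ) : ℂ :=
  ((-1 : ℂ) ^ k *
      (∏ j ∈ Finset.range k, ((((s - (j + 1)) * ((n : ℝ) + s - (j + 1))) : ℝ) : ℂ)) /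
    (((k : ℂ) + 1) * ((k.factorial : ℂ)) ^ 2)) * C

theorem vekuaCoeff_zero : vekuaCoeff n s C 0 = C := by
  simp [vekuaCoeff]

theorem vekuaCoeff_succ (k : ℕ) :
    vekuaCoeff n s C (k + 1)
      = -(((s : ℂ) - (k + 1)) * (n + s - (k + 1)) / ((k + 1) * (k + 2))) * vekuaCoeff n s C k := by
  have hk₁ : (k : ℂ) + 1 ≠ 0 := Nat.cast_add_one_ne_zero k
  have hk₂ : (k : ℂ) + 2 ≠ 0 := by exact_mod_cast (k + 1).succ_ne_zero
  have hfac : (k.factorial : ℂ) ≠ 0 := Nat.cast_ne_zero.mpr k.factorial_ne_zero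
  simp only [vekuaCoeff, prod_range_succ, Nat.factorial_succ]
  generalize ∏ j ∈ range k, ((((s - (j + 1)) * ((n : ℝ) + s - (j + 1))) : ℝ) : ℂ) = P
  push_cast
  rw [show (k : ℂ) + 1 + 1 = k + 2 by ring]
  field_simp
  ring

theorem vekuaCoeff_eq_zero_of_le {m k : ℕ} (hm : 0 < m) (hs : s = m) (hk : m ≤ k) :
    vekuaCoeff n s C k = 0 := by
  have hvanish : ∏ j ∈ range k, ((((s - (j + 1)) * ((n : ℝ) + s - (j + 1))) : ℝ) : ℂ) = 0 :=
    prod_eq_zero_iff.mpr ⟨m - 1, mem_range.mpr (by omega), by rw [Nat.cast_sub hm, hs]; simp⟩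
  rw [vekuaCoeff, hvanish, mul_zero, zero_div, zero_mul]

end Coefficients

theorem hermitian_generalized_powers_general (n : ℕ) (s : ℝ) (l : ℂ)
    (α₁ α₂ : ℝ) (a01 a02 : ℝ → ℂ)
    (ha01 : ∀ ν : ℝ, a01 ν = (α₁ : ℂ) * ((ν ^ s : ℝ) : ℂ))
    (ha02 : ∀ ν : ℝ, a02 ν = (α₂ : ℂ) * ((ν ^ (s - 1) : ℝ) : ℂ))
    (δ : ℕ → ℂ)
    (hδ : ∀ k : ℕ, δ k =
      ((-1 : ℂ) ^ k *
          (∏ j ∈ Finset.range k,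
            ((((s - (j + 1)) * ((n : ℝ) + s - (j + 1))) : ℝ) : ℂ)) /
        (((k : ℂ) + 1) * ((k.factorial : ℂ)) ^ 2)) *
      ((l - (n : ℂ) - (s : ℂ)) * (α₂ : ℂ) - (α₁ : ℂ) * (s : ℂ)))
    (c : ℕ → ℝ → ℂ)
    (hc : ∀ (k : ℕ) (ν : ℝ), c k ν = δ k * ((ν ^ (s - (k : ℝ) - 1) : ℝ) : ℂ)) :
    (∀ ν : ℝ, 0 < ν →
      c 0 ν = (l - (n : ℂ) - 1) * a02 ν - deriv a01 ν - (ν : ℂ) * deriv a02 ν) ∧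
    (∀ k : ℕ, 1 ≤ k → ∀ ν : ℝ, 0 < ν →
      c k ν = -(1 / ((k : ℂ) * ((k : ℂ) + 1))) *
        (((n : ℂ) + 1) * deriv (c (k - 1)) ν +
          (ν : ℂ) * deriv (deriv (c (k - 1))) ν)) ∧
    (∀ m : ℕ, 0 < m → s = (m : ℝ) → ∀ k : ℕ, m ≤ k → δ k = 0) := by
  obtain rfl : δ = vekuaCoeff n s ((l - n - s) * α₂ - α₁ * s) := funext hδ
  obtain rfl : a01 = fun x => (α₁ : ℂ) * ((x ^ s : ℝ) : ℂ) := funext ha01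
  obtain rfl : a02 = fun x => (α₂ : ℂ) * ((x ^ (s - 1) : ℝ) : ℂ) := funext ha02
  refine ⟨fun ν hν => ?_, fun k hk ν hν => ?_, fun m hm hs k hk => vekuaCoeff_eq_zero_of_le n s _ hm hs hk⟩
  · rw [hc, Nat.cast_zero, sub_zero, vekuaCoeff_zero, deriv_const_mul_ofReal_rpow _ _ hν.ne',
      deriv_const_mul_ofReal_rpow _ _ hν.ne']
    have hpow := ofReal_mul_rpow_sub_one (s - 1) hν.ne'
    push_cast
    linear_combination (α₂ * (s - 1) : ℂ) * hpow
  · obtain ⟨k, rfl⟩ := Nat.exists_eq_add_of_le' hk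
    have hc_k : c k = fun x => vekuaCoeff n s _ k * ((x ^ (s - k - 1) : ℝ) : ℂ) := funext (hc k)
    rw [Nat.add_sub_cancel, hc_k, radial_operator_const_mul_ofReal_rpow _ _ _ hν.ne', hc,
      vekuaCoeff_succ]
    push_cast
    rw [show s - (k + 1) - 1 = s - k - 1 - 1 by ring]
    field_simp
    ring

/-- The Hermitian Vekua recurrence for generalized powers: with
initial data `a_{0,1}(ν) = α₁ν^s`, `a_{0,2}(ν) = α₂ν^{s−1}`, the functions
`c_k(ν) = δ(k) ν^{s−k−1}` with
`δ(k) = ((−1)^k ∏_{j=1}^k (s−j)(n+s−j)/((k+1)(k!)²))((ℓ−n−s)α₂ − α₁s)`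
solve `c_0 = (ℓ−n−1)a_{0,2} − a_{0,1}′ − ν a_{0,2}′` and
`c_k = −(1/(k(k+1)))((n+1)c_{k−1}′ + ν c_{k−1}″)` on `(0,∞)`; moreover if `s` is
a positive integer then `δ(k) = 0` for all `k ≥ s`. -/
theorem hermitian_generalized_powers (n : ℕ) (hn : 1 ≤ n) (s : ℝ) (l : ℂ)
    (α₁ α₂ : ℝ) (a01 a02 : ℝ → ℂ)
    (ha01 : ∀ ν : ℝ, a01 ν = (α₁ : ℂ) * ((ν ^ s : ℝ) : ℂ))
    (ha02 : ∀ ν : ℝ, a02 ν = (α₂ : ℂ) * ((ν ^ (s - 1) : ℝ) : ℂ))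
    (δ : ℕ → ℂ)
    (hδ : ∀ k : ℕ, δ k =
      ((-1 : ℂ) ^ k *
          (∏ j ∈ Finset.range k,
            ((((s - (j + 1)) * ((n : ℝ) + s - (j + 1))) : ℝ) : ℂ)) /
        (((k : ℂ) + 1) * ((k.factorial : ℂ)) ^ 2)) *
      ((l - (n : ℂ) - (s : ℂ)) * (α₂ : ℂ) - (α₁ : ℂ) * (s : ℂ)))
    (c : ℕ → ℝ → ℂ)
    (hc : ∀ (k : ℕ) (ν : ℝ), c k ν = δ k * ((ν ^ (s - (k : ℝ) - 1) : ℝ) : ℂ)) :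
    (∀ ν : ℝ, 0 < ν →
      c 0 ν = (l - (n : ℂ) - 1) * a02 ν - deriv a01 ν - (ν : ℂ) * deriv a02 ν) ∧
    (∀ k : ℕ, 1 ≤ k → ∀ ν : ℝ, 0 < ν →
      c k ν = -(1 / ((k : ℂ) * ((k : ℂ) + 1))) *
        (((n : ℂ) + 1) * deriv (c (k - 1)) ν +
          (ν : ℂ) * deriv (deriv (c (k - 1))) ν)) ∧
    (∀ m : ℕ, 0 < m → s = (m : ℝ) → ∀ k : ℕ, m ≤ k → δ k = 0) :=
  hermitian_generalized_powers_general n s l α₁ α₂ a01 a02 ha01 ha02 δ hδ c hc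
end
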